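/- Let F be a finite field with q elements, q not divisible by 3. For all a,b,c,d ∈ F with ad − bc ≠ 0 and every nonzero row vector x = (x_0,x_1,x_2,x_3) ∈ F^4, write x' = (x_0',x_1',x_2',x_3') = x·M(a,b,c,d). Then the image under M(a,b,c,d) of the polar hyperplane of [x] equals the polar hyperplane of [x']; that is, {y·M(a,b,c,d) : y ∈ F^4 with x_3·y_0 − 3x_2·y_1 + 3x_1·y_2 − x_0·y_3 = 0} = {z ∈ F^4 : x_3'·z_0 − 3x_2'·z_1 + 3x_1'·z_2 − x_0'·z_3 = 0}. -/
import Mathlib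


open Matrix

noncomputable section

/-- The general matrix of a projectivity of `G_q` (row-vector convention). -/
def Mmat (F : Type) [Field F] (a b c d : F) : Matrix (Fin 4) (Fin 4) F :=
  !![a ^ 3,         a ^ 2 * c,             a * c ^ 2,             c ^ 3;
     3 * a ^ 2 * b, a ^ 2 * d + 2 * a * b * c, b * c ^ 2 + 2 * a * c * d, 3 * c ^ 2 * d;
     3 * a * b ^ 2, b ^ 2 * c + 2 * a * b * d, a * d ^ 2 + 2 * b * c * d, 3 * c * d ^ 2;
     b ^ 3,         b ^ 2 * d,             b * d ^ 2,             d ^ 3]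

/-- The null-polarity bilinear form transforms under `Mmat` with factor `(ad-bc)^3`. -/
lemma Mmat_key (F : Type) [Field F] (a b c d : F) (x y : Fin 4 → F) :
    (x ᵥ* Mmat F a b c d) 3 * (y ᵥ* Mmat F a b c d) 0
      - 3 * (x ᵥ* Mmat F a b c d) 2 * (y ᵥ* Mmat F a b c d) 1
      + 3 * (x ᵥ* Mmat F a b c d) 1 * (y ᵥ* Mmat F a b c d) 2
      - (x ᵥ* Mmat F a b c d) 0 * (y ᵥ* Mmat F a b c d) 3
    = (a * d - b * c) ^ 3 * (x 3 * y 0 - 3 * x 2 * y 1 + 3 * x 1 * y 2 - x 0 * y 3) := by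
  simp [Mmat, vecMul, dotProduct, Fin.sum_univ_four]
  ring

/-- Explicit inverse up to the scalar `(ad-bc)^3`. -/
lemma Mmat_inv_key (F : Type) [Field F] (a b c d : F) (z : Fin 4 → F) :
    (z ᵥ* Mmat F d (-b) (-c) a) ᵥ* Mmat F a b c d = ((a * d - b * c) ^ 3) • z := by
  funext i
  fin_cases i <;>
    (simp [Mmat, vecMul, dotProduct, Fin.sum_univ_four]; ring)

/-- The image under `M(a,b,c,d)` of the polar hyperplane of `[x]` equals the polar
hyperplane of `[x·M(a,b,c,d)]` (null polarity, `q` not divisible by 3). -/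
theorem stmt_6 (F : Type) [Field F] [Fintype F] (h3 : ¬ 3 ∣ Fintype.card F)
    (a b c d : F) (had : a * d - b * c ≠ 0)
    (x : Fin 4 → F) (hx : x ≠ 0) :
    (fun y : Fin 4 → F => y ᵥ* Mmat F a b c d) ''
        {y : Fin 4 → F |
          x 3 * y 0 - 3 * x 2 * y 1 + 3 * x 1 * y 2 - x 0 * y 3 = 0}
      = {z : Fin 4 → F |
          (x ᵥ* Mmat F a b c d) 3 * z 0 - 3 * (x ᵥ* Mmat F a b c d) 2 * z 1
            + 3 * (x ᵥ* Mmat F a b c d) 1 * z 2 - (x ᵥ* Mmat F a b c d) 0 * z 3 = 0} := by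
  have hk : (a * d - b * c) ^ 3 ≠ 0 := pow_ne_zero _ had
  ext z
  simp only [Set.mem_image, Set.mem_setOf_eq]
  constructor
  · rintro ⟨y, hy, rfl⟩
    rw [Mmat_key, hy, mul_zero]
  · intro hz
    refine ⟨((a * d - b * c) ^ 3)⁻¹ • (z ᵥ* Mmat F d (-b) (-c) a), ?_, ?_⟩
    · have h := Mmat_key F a b c d x (((a * d - b * c) ^ 3)⁻¹ • (z ᵥ* Mmat F d (-b) (-c) a))
      have hy : (((a * d - b * c) ^ 3)⁻¹ • (z ᵥ* Mmat F d (-b) (-c) a)) ᵥ* Mmat F a b c d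
          = z := by
        rw [Matrix.smul_vecMul, Mmat_inv_key, smul_smul, inv_mul_cancel₀ hk, one_smul]
      rw [hy] at h
      exact (mul_eq_zero.mp (h ▸ hz)).resolve_left hk
    · rw [Matrix.smul_vecMul, Mmat_inv_key, smul_smul, inv_mul_cancel₀ hk, one_smul]
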